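/- arXiv:2506.16332 — 5 statements merged into one kernel-verified Lean document; each statement's English description precedes it below -/
import Mathlib

section
/- Let n ≥ 1 be a natural number, let 𝔫 be the smallest natural number with 2^𝔫 ≥ 4n, set n_U = 2^𝔫 and n₀ = n_U − 4n. Fix N, d ∈ ℕ, a point (x,z) ∈ ℝ^N × ℝ^d, and parameters aⁱ ∈ ℝ^{N+d}, bⁱ ∈ ℝ, γⁱ ∈ [0,2π] for i = 1,…,n. Set δⁱ := −bⁱ − aⁱ·(x,z), let Āⁱ := R_x(δⁱ) ⊗ R_y(γⁱ) ∈ ℂ^{4×4} (Kronecker product), and let U ∈ ℂ^{n_U×n_U} be the block-diagonal matrix whose first n diagonal 4×4 blocks are Ā¹,…,Āⁿ and whose remaining diagonal block is the n₀×n₀ identity. Let ψ := (1/√n) Σ_{i=0}^{n−1} e_{4i} ∈ ℂ^{n_U}, where (e_k)_{k=0,…,n_U−1} is the standard basis, and for m ∈ {0,1,2,3} define the measurement probability P_m := Σ_{i=0}^{n−1} |(Uψ)_{4i+m}|². Then for every R ∈ ℝ: R − 2R(P₁ + P₂) = (1/n) Σ_{i=1}^{n} R cos(γⁱ) cos(bⁱ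 + aⁱ·(x,z)). -/
open scoped BigOperators

/-- The rotation gate around the X-axis:
`R_x(δ) = [[cos(δ/2), −i sin(δ/2)], [−i sin(δ/2), cos(δ/2)]]`. -/
noncomputable def rotX (δ : ℝ) : Matrix (Fin 2) (Fin 2) ℂ :=
  !![(Real.cos (δ / 2) : ℂ), -Complex.I * (Real.sin (δ / 2) : ℂ);
     -Complex.I * (Real.sin (δ / 2) : ℂ), (Real.cos (δ / 2) : ℂ)]

/-- The rotation gate around the Y-axis:
`R_y(γ) = [[cos(γ/2), −sin(γ/2)], [sin(γ/2), cos(γ/2)]]`. -/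
noncomputable def rotY (γ : ℝ) : Matrix (Fin 2) (Fin 2) ℂ :=
  !![(Real.cos (γ / 2) : ℂ), -(Real.sin (γ / 2) : ℂ);
     (Real.sin (γ / 2) : ℂ), (Real.cos (γ / 2) : ℂ)]

/-- The Kronecker product of two `2 × 2` complex matrices, as a `4 × 4` matrix with the
standard (row-major) flattening of indices: `(A ⊗ B)_{2i+j, 2k+l} = A_{i,k} B_{j,l}`. -/
noncomputable def kron2 (A B : Matrix (Fin 2) (Fin 2) ℂ) : Matrix (Fin 4) (Fin 4) ℂ :=
  Matrix.of fun p q =>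
    A ⟨p.val / 2, by have := p.isLt; omega⟩ ⟨q.val / 2, by have := q.isLt; omega⟩ *
      B ⟨p.val % 2, by omega⟩ ⟨q.val % 2, by omega⟩

/-- The `nU × nU` block-diagonal matrix whose first `n` diagonal `4 × 4` blocks are
`A 0, …, A (n-1)` and whose remaining diagonal block is the `(nU − 4n) × (nU − 4n)` identity. -/
noncomputable def blockU (n nU : ℕ) (h : 4 * n ≤ nU) (A : Fin n → Matrix (Fin 4) (Fin 4) ℂ) :
    Matrix (Fin nU) (Fin nU) ℂ :=
  Matrix.of fun k l =>
    if hk : k.val < 4 * n ∧ l.val < 4 * n then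
      if k.val / 4 = l.val / 4 then
        A ⟨k.val / 4, by omega⟩ ⟨k.val % 4, by omega⟩ ⟨l.val % 4, by omega⟩
      else 0
    else if k = l then 1 else 0

/-- The state `ψ = (1/√n) Σ_{i=0}^{n−1} e_{4i} ∈ ℂ^{nU}`: the coordinates `k = 4i` with
`i < n` are `1/√n` and all other coordinates vanish. -/
noncomputable def psiVec (n nU : ℕ) : Fin nU → ℂ :=
  fun k => if k.val < 4 * n ∧ k.val % 4 = 0 then ((1 / Real.sqrt n : ℝ) : ℂ) else 0

/-- The measurement probability `P_m = Σ_{i=0}^{n−1} |v_{4i+m}|²` for a state `v ∈ ℂ^{nU}`. -/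
noncomputable def measProb (n nU : ℕ) (h : 4 * n ≤ nU) (v : Fin nU → ℂ) (m : Fin 4) : ℝ :=
  ∑ i : Fin n, ‖v ⟨4 * i.val + m.val, by have := i.isLt; have := m.isLt; omega⟩‖ ^ 2

/-- the representation of the recurrent quantum neural network output
`R − 2R(P₁ + P₂)` as the cosine expansion `(1/n) Σᵢ R cos(γⁱ) cos(bⁱ + aⁱ·(x,z))`. -/
theorem rqnn_output_representation
    (n : ℕ) (hn : 1 ≤ n) (𝔫 : ℕ)
    (h𝔫 : 4 * n ≤ 2 ^ 𝔫) (h𝔫min : ∀ m : ℕ, 4 * n ≤ 2 ^ m → 𝔫 ≤ m)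
    (N d : ℕ) (x : Fin N → ℝ) (z : Fin d → ℝ)
    (a : Fin n → Fin (N + d) → ℝ) (b : Fin n → ℝ) (γ : Fin n → ℝ)
    (hγ : ∀ i, γ i ∈ Set.Icc (0 : ℝ) (2 * Real.pi)) (R : ℝ) :
    -- δⁱ := −bⁱ − aⁱ·(x,z), Āⁱ := R_x(δⁱ) ⊗ R_y(γⁱ)
    let δ : Fin n → ℝ := fun i => -(b i) - ∑ k, a i k * Fin.append x z k
    let Abar : Fin n → Matrix (Fin 4) (Fin 4) ℂ := fun i => kron2 (rotX (δ i)) (rotY (γ i))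
    -- U : block-diagonal with blocks Ā¹,…,Āⁿ and trailing identity; ψ uniform over e_{4i}
    let U : Matrix (Fin (2 ^ 𝔫)) (Fin (2 ^ 𝔫)) ℂ := blockU n (2 ^ 𝔫) h𝔫 Abar
    let P : Fin 4 → ℝ := measProb n (2 ^ 𝔫) h𝔫 (U.mulVec (psiVec n (2 ^ 𝔫)))
    R - 2 * R * (P 1 + P 2) =
      (1 / n) * ∑ i, R * Real.cos (γ i) * Real.cos (b i + ∑ k, a i k * Fin.append x z k) := by
  intro δ Abar U P
  have hn0 : (0 : ℝ) < n := by exact_mod_cast hn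
  -- key: coordinates of U.mulVec ψ
  have hU : ∀ (i : Fin n) (m : Fin 4) (hk : 4 * i.val + m.val < 2 ^ 𝔫),
      U.mulVec (psiVec n (2 ^ 𝔫)) ⟨4 * i.val + m.val, hk⟩
        = Abar i m ⟨0, by norm_num⟩ * ((1 / Real.sqrt n : ℝ) : ℂ) := by
    intro i m hk
    have hi := i.isLt
    have hm := m.isLt
    have hl : 4 * i.val < 2 ^ 𝔫 := by omega
    rw [Matrix.mulVec, dotProduct]
    rw [Finset.sum_eq_single (⟨4 * i.val, hl⟩ : Fin (2 ^ 𝔫))]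
    · simp only [U, blockU, psiVec, Matrix.of_apply]
      rw [dif_pos (by constructor <;> omega)]
      rw [if_pos (by omega)]
      rw [if_pos (by constructor <;> omega)]
      congr 1
      have h1 : (4 * i.val + m.val) / 4 = i.val := by omega
      have h2 : (4 * i.val + m.val) % 4 = m.val := by omega
      have h3 : (4 * i.val) % 4 = 0 := by omega
      simp only [Abar]
      congr <;> simp [h1, h2, h3]
    · intro l _ hne
      by_cases hp : l.val < 4 * n ∧ l.val % 4 = 0
      · have : l.val ≠ 4 * i.val := fun h => hne (Fin.ext h)
        simp only [U, blockU, psiVec, Matrix.of_apply]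
        rw [if_pos hp]
        rw [dif_pos ⟨by omega, hp.1⟩]
        rw [if_neg (by omega)]
        simp
      · simp only [psiVec]
        rw [if_neg hp, mul_zero]
    · intro h; exact absurd (Finset.mem_univ _) h
  -- entries of Abar
  have hA1 : ∀ i : Fin n, Abar i 1 ⟨0, by norm_num⟩
      = ((Real.cos (δ i / 2) * Real.sin (γ i / 2) : ℝ) : ℂ) := by
    intro i
    simp only [Abar, kron2, rotX, rotY, Matrix.of_apply]
    norm_num [Fin.ext_iff]
  have hA2 : ∀ i : Fin n, Abar i 2 ⟨0, by norm_num⟩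
      = -Complex.I * ((Real.sin (δ i / 2) * Real.cos (γ i / 2) : ℝ) : ℂ) := by
    intro i
    simp only [Abar, kron2, rotX, rotY, Matrix.of_apply]
    norm_num [Fin.ext_iff]
    ring
  have hsq : ((1 : ℝ) / Real.sqrt n) ^ 2 = 1 / n := by
    rw [div_pow, one_pow, Real.sq_sqrt hn0.le]
  -- P 1
  have hP1 : P 1 = ∑ i : Fin n, Real.cos (δ i / 2) ^ 2 * Real.sin (γ i / 2) ^ 2 * (1 / n) := by
    simp only [P, measProb]
    refine Finset.sum_congr rfl fun i _ => ?_
    rw [hU i 1 (by have := i.isLt; omega), hA1, ← Complex.ofReal_mul, Complex.norm_real,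
      Real.norm_eq_abs, sq_abs, mul_pow, mul_pow, hsq]
  have hP2 : P 2 = ∑ i : Fin n, Real.sin (δ i / 2) ^ 2 * Real.cos (γ i / 2) ^ 2 * (1 / n) := by
    simp only [P, measProb]
    refine Finset.sum_congr rfl fun i _ => ?_
    rw [hU i 2 (by have := i.isLt; omega), hA2, mul_assoc, ← Complex.ofReal_mul, norm_mul,
      Complex.norm_real]
    simp only [norm_neg, Complex.norm_I, one_mul, Real.norm_eq_abs]
    rw [sq_abs, mul_pow, mul_pow, hsq]
  rw [hP1, hP2]
  -- rewrite RHS summand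
  have hterm : ∀ i : Fin n,
      R * Real.cos (γ i) * Real.cos (b i + ∑ k, a i k * Fin.append x z k)
      = R - 2 * R * (Real.cos (δ i / 2) ^ 2 * Real.sin (γ i / 2) ^ 2
          + Real.sin (δ i / 2) ^ 2 * Real.cos (γ i / 2) ^ 2) := by
    intro i
    have hδ : Real.cos (b i + ∑ k, a i k * Fin.append x z k) = Real.cos (δ i) := by
      have : δ i = -(b i + ∑ k, a i k * Fin.append x z k) := by simp only [δ]; ring
      rw [this, Real.cos_neg]
    rw [hδ]
    have e1 : Real.cos (δ i) = 2 * Real.cos (δ i / 2) ^ 2 - 1 := by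
      rw [← Real.cos_two_mul]; ring_nf
    have e2 : Real.cos (γ i) = 2 * Real.cos (γ i / 2) ^ 2 - 1 := by
      rw [← Real.cos_two_mul]; ring_nf
    rw [e1, e2, Real.sin_sq, Real.sin_sq]; ring
  rw [Finset.sum_congr rfl fun i _ => hterm i]
  rw [Finset.sum_sub_distrib, Finset.sum_const, Finset.card_univ, Fintype.card_fin,
    nsmul_eq_mul, ← Finset.mul_sum, Finset.sum_add_distrib, ← Finset.sum_mul, ← Finset.sum_mul]
  have hne : (n : ℝ) ≠ 0 := hn0.ne'
  generalize (∑ i : Fin n, Real.cos (δ i / 2) ^ 2 * Real.sin (γ i / 2) ^ 2) = S1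
  generalize (∑ i : Fin n, Real.sin (δ i / 2) ^ 2 * Real.cos (γ i / 2) ^ 2) = S2
  field_simp
end

section
/- Let N, d, K ≥ 1 with K ≤ N, let I₁,…,I_K ≥ 1 be natural numbers with I₁ + ⋯ + I_K = N, and set l_k := I₁ + ⋯ + I_k for k = 1,…,K (l₀ := 0). For j = 1,…,N define matrices P_j ∈ ℝ^{N×N} as follows: if j ∈ {l_{k−1}+1,…,l_k} for some k ∈ {1,…,K−1}, then P_j has entries (P_j)_{l, l+l_k} = 1 for l = 1,…, Σ_{s=k+1}^K I_s and all other entries zero; if j ∈ {l_{K−1}+1,…,N}, then P_j = 0. Let g₁,…,g_N : ℝ^N × ℝ^d → ℝ be arbitrary maps and define F̃ = (F̃₁,…,F̃_N) : ℝ^N × ℝ^d → ℝ^N by F̃_j(x,z) := g_j(P_j x, z). Then F̃ has the echo state property: for every input sequence z : ℤ → ℝ^d there exists a unique sequence x̂ : ℤ → ℝ^N satisfying x̂_t = F̃(x̂_{t−1}, z_t) for all t ∈ ℤ. -/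
open scoped BigOperators

noncomputable def espAux (N d : ℕ) (P : Fin N → Matrix (Fin N) (Fin N) ℝ)
    (g : Fin N → (Fin N → ℝ) → (Fin d → ℝ) → ℝ) (z : ℤ → Fin d → ℝ) :
    Fin N → ℤ → ℝ
  | j => fun t => g j ((P j).mulVec
      (fun q => if h : j < q then espAux N d P g z q (t - 1) else 0)) (z t)
  termination_by j => N - j.val
  decreasing_by
    rename_i h
    rw [Fin.lt_def] at h
    have := q.isLt
    omega

/-- linear preprocessing maps with a triangular (finite-memory) block
structure yield the echo state property for arbitrary reservoir maps.

Blocks are encoded by sizes `I 0, …, I (K-1)` summing to `N`, with `l k = I 0 + ⋯ + I (k-1)`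
(so `l` here is the paper's `l_k` with `l 0 = 0`). In the paper's 1-indexed notation, the
`j`-th coordinate (1-indexed `j ∈ {l_{k−1}+1,…,l_k}`, i.e. 0-indexed `l (k-1) ≤ j < l k`)
for `k ∈ {1,…,K−1}` uses the matrix `P j` with entries `(P j)_{p, p + l k} = 1` for
0-indexed `p < N − l k` and all other entries zero, while `P j = 0` for the last block. -/
theorem preprocessing_echo_state_property
    (N d K : ℕ) (hN : 1 ≤ N) (hd : 1 ≤ d) (hK : 1 ≤ K) (hKN : K ≤ N)
    (I : ℕ → ℕ) (hI : ∀ s, s < K → 1 ≤ I s)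
    (hsum : ∑ s ∈ Finset.range K, I s = N)
    (l : ℕ → ℕ) (hl : ∀ k, l k = ∑ s ∈ Finset.range k, I s)
    (P : Fin N → Matrix (Fin N) (Fin N) ℝ)
    (hP : ∀ k : ℕ, 1 ≤ k → k ≤ K - 1 → ∀ j : Fin N,
      l (k - 1) ≤ j.val → j.val < l k →
      ∀ p q : Fin N, P j p q = if q.val = p.val + l k ∧ p.val < N - l k then 1 else 0)
    (hP0 : ∀ j : Fin N, l (K - 1) ≤ j.val → P j = 0)
    (g : Fin N → (Fin N → ℝ) → (Fin d → ℝ) → ℝ) :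
    ∀ z : ℤ → (Fin d → ℝ),
      ∃! xhat : ℤ → (Fin N → ℝ),
        ∀ t : ℤ, xhat t = fun j => g j ((P j).mulVec (xhat (t - 1))) (z t) := by
  intro z
  -- any index below l m lies in some block
  have hblock : ∀ m : ℕ, ∀ j : ℕ, j < l m →
      ∃ k, 1 ≤ k ∧ k ≤ m ∧ l (k - 1) ≤ j ∧ j < l k := by
    intro m
    induction m with
    | zero => intro j hj; simp [hl] at hj
    | succ m ih =>
      intro j hj
      by_cases h : j < l m
      · obtain ⟨k, hk1, hk2, hk3, hk4⟩ := ih j h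
        exact ⟨k, hk1, hk2.trans (Nat.le_succ m), hk3, hk4⟩
      · exact ⟨m + 1, Nat.succ_le_succ (Nat.zero_le m), le_refl _, by simpa using not_lt.mp h, hj⟩
  -- nonzero entries of P j are in columns strictly above j
  have hne : ∀ j p q : Fin N, P j p q ≠ 0 → j.val < q.val := by
    intro j p q hpq
    by_cases hj : l (K - 1) ≤ j.val
    · exact absurd (by simp [hP0 j hj]) hpq
    · obtain ⟨k, hk1, hk2, hk3, hk4⟩ := hblock (K - 1) j.val (not_le.mp hj)
      rw [hP k hk1 hk2 j hk3 hk4 p q] at hpq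
      by_cases hc : q.val = p.val + l k ∧ p.val < N - l k
      · omega
      · simp [hc] at hpq
  -- mulVec (P j) only depends on coordinates strictly above j
  have hcong : ∀ (j : Fin N) (y y' : Fin N → ℝ),
      (∀ q : Fin N, j.val < q.val → y q = y' q) → (P j).mulVec y = (P j).mulVec y' := by
    intro j y y' hy
    funext p
    simp only [Matrix.mulVec, dotProduct]
    refine Finset.sum_congr rfl fun q _ => ?_
    by_cases h : P j p q = 0
    · simp [h]
    · rw [hy q (hne j p q h)]
  refine ⟨fun t j => espAux N d P g z j t, ?_, ?_⟩
  · intro t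
    funext j
    show espAux N d P g z j t = _
    rw [espAux]; beta_reduce
    congr 1
    apply hcong
    intro q hq
    rw [dif_pos (Fin.lt_def.mpr hq)]
  · intro x hx
    have key : ∀ m : ℕ, ∀ j : Fin N, N - j.val ≤ m → ∀ t : ℤ,
        x t j = espAux N d P g z j t := by
      intro m
      induction m with
      | zero => intro j hj; have := j.isLt; omega
      | succ m ih =>
        intro j hj t
        have h1 : x t j = g j ((P j).mulVec (x (t - 1))) (z t) := by
          rw [hx t]
        rw [h1, espAux]; beta_reduce
        congr 1
        apply hcong
        intro q hq
        rw [ih q (by have := q.isLt; omega) (t - 1), dif_pos (Fin.lt_def.mpr hq)]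
    funext t j
    exact key N j (by omega) t
end

section
/- Let D ≥ 1 and let f : ℝ^D → ℝ be continuously differentiable, continuous and integrable, with integrable Fourier transform f̂, and such that ∫_{ℝ^D} ξ_i² |f̂(ξ)| dξ < ∞ for each i = 1,…,D. Then there exists a probability measure π on ℝ^D × ℝ × ℝ (with generic point (a, b, w)) such that: (i) |w| ≤ ‖f̂‖₁ for π-almost every (a,b,w); (ii) for every y ∈ ℝ^D, ∫ w cos(b + a·y) dπ(a,b,w) = f(y); (iii) for every y ∈ ℝ^D and every i = 1,…,D, ∫ w a_i sin(b + a·y) dπ(a,b,w) = −∂_i f(y); and (iv) ∫ w² dπ ≤ ‖f̂‖₁² and, for each i, ∫ w² a_i² dπ ≤ 4π² ‖f̂‖₁ ∫_{ℝ^D} ξ_i² |f̂(ξ)| dξ. -/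
open MeasureTheory Real
open scoped FourierTransform RealInnerProductSpace BigOperators

/-- The Fourier transform `f̂(ξ) = ∫ e^{−2πi y·ξ} f(y) dy` of a real-valued function on `ℝ^D`. -/
noncomputable def fourierT {D : ℕ} (f : EuclideanSpace ℝ (Fin D) → ℝ) :
    EuclideanSpace ℝ (Fin D) → ℂ :=
  𝓕 (fun y => (f y : ℂ))

/-- The `i`-th partial derivative `∂_i g` of `g : ℝ^D → ℝ`. -/
noncomputable def pder {D : ℕ} (i : Fin D) (g : EuclideanSpace ℝ (Fin D) → ℝ)
    (y : EuclideanSpace ℝ (Fin D)) : ℝ :=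
  fderiv ℝ g y (EuclideanSpace.single i 1)

private lemma re_exp_mul_eq (z : ℂ) (φ : ℝ) :
    (Complex.exp ((φ : ℂ) * Complex.I) * z).re = ‖z‖ * Real.cos (Complex.arg z + φ) := by
  nth_rewrite 1 [← Complex.norm_mul_exp_arg_mul_I z]
  rw [mul_comm (Complex.exp _), mul_assoc, ← Complex.exp_add, ← add_mul, ← Complex.ofReal_add,
    Complex.re_ofReal_mul, Complex.exp_ofReal_mul_I_re]

/-- the integral (random-feature) representation of Barron-type functions by
cosine features, jointly for the function and all of its first partial derivatives, with
second-moment bounds. The generic point of the measure `π` is `(a, b, w) ∈ ℝ^D × ℝ × ℝ`. -/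
theorem cosine_random_feature_representation
    {D : ℕ} (hD : 1 ≤ D) (f : EuclideanSpace ℝ (Fin D) → ℝ)
    (hf1 : ContDiff ℝ 1 f) (hfc : Continuous f) (hfi : Integrable f)
    (hfhat_int : Integrable (fourierT f))
    (hmom : ∀ i : Fin D,
      Integrable (fun ξ : EuclideanSpace ℝ (Fin D) => (ξ i) ^ 2 * ‖fourierT f ξ‖)) :
    ∃ π' : Measure (EuclideanSpace ℝ (Fin D) × ℝ × ℝ),
      IsProbabilityMeasure π' ∧
      (∀ᵐ p ∂π', |p.2.2| ≤ ∫ ξ, ‖fourierT f ξ‖) ∧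
      (∀ y, ∫ p, p.2.2 * Real.cos (p.2.1 + ⟪p.1, y⟫) ∂π' = f y) ∧
      (∀ y, ∀ i : Fin D,
        ∫ p, p.2.2 * p.1 i * Real.sin (p.2.1 + ⟪p.1, y⟫) ∂π' = -(pder i f y)) ∧
      (∫ p, p.2.2 ^ 2 ∂π') ≤ (∫ ξ, ‖fourierT f ξ‖) ^ 2 ∧
      (∀ i : Fin D, (∫ p, p.2.2 ^ 2 * (p.1 i) ^ 2 ∂π') ≤
        4 * π ^ 2 * (∫ ξ, ‖fourierT f ξ‖) *
          ∫ ξ, (ξ i) ^ 2 * ‖fourierT f ξ‖) := by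
  have hfcC : Continuous fun y => (f y : ℂ) := Complex.continuous_ofReal.comp hfc
  have hFhc : Continuous (fourierT f) :=
    VectorFourier.fourierIntegral_continuous Real.continuous_fourierChar
      (by exact continuous_inner) hfi.ofReal
  have hargm : Measurable fun ξ : EuclideanSpace ℝ (Fin D) => Complex.arg (fourierT f ξ) :=
    Complex.measurable_arg.comp hFhc.measurable
  set C := ∫ ξ, ‖fourierT f ξ‖ with hCdef
  have hC0 : 0 ≤ C := integral_nonneg fun ξ => norm_nonneg _
  -- (I) : inversion identity
  have hI : ∀ y, ∫ ξ, ‖fourierT f ξ‖ *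
      Real.cos (Complex.arg (fourierT f ξ) + 2 * π * ⟪ξ, y⟫) = f y := by
    intro y
    have h1 : 𝓕⁻ (fourierT f) y = ((f y : ℂ)) :=
      hfi.ofReal.fourierInv_fourier_eq hfhat_int hfcC.continuousAt
    rw [Real.fourierInv_eq'] at h1
    have hint : Integrable fun ξ : EuclideanSpace ℝ (Fin D) =>
        Complex.exp ((2 * π * ⟪ξ, y⟫ : ℝ) * Complex.I) • fourierT f ξ := by
      refine hfhat_int.norm.mono' ?_ (Filter.Eventually.of_forall fun ξ => ?_)
      · exact ((Complex.continuous_exp.comp ((Complex.continuous_ofReal.comp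
          (continuous_const.mul (Continuous.inner continuous_id continuous_const))).mul
          continuous_const)).smul hFhc).aestronglyMeasurable
      · rw [norm_smul, Complex.norm_exp_ofReal_mul_I, one_mul]
    have h2 : (∫ ξ, Complex.exp ((2 * π * ⟪ξ, y⟫ : ℝ) * Complex.I) • fourierT f ξ).re = f y := by
      rw [h1, Complex.ofReal_re]
    have h3 := Complex.reCLM.integral_comp_comm hint
    simp only [Complex.reCLM_apply] at h3
    rw [← h2, ← h3]
    refine integral_congr_ae (Filter.Eventually.of_forall fun ξ => ?_)
    simp only [smul_eq_mul, re_exp_mul_eq]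
  -- integrable dominating function for the differentiation under the integral
  have habs : ∀ i : Fin D, Integrable
      (fun ξ : EuclideanSpace ℝ (Fin D) => ‖fourierT f ξ‖ * (2 * π * |ξ i|)) := by
    intro i
    refine ((hfhat_int.norm.add (hmom i)).const_mul π).mono' ?_
      (Filter.Eventually.of_forall fun ξ => ?_)
    · exact (hFhc.norm.mul (continuous_const.mul
        (EuclideanSpace.proj (𝕜 := ℝ) i).continuous.abs)).aestronglyMeasurable
    · have h1 : 2 * |ξ i| ≤ 1 + (ξ i) ^ 2 := by
        nlinarith [sq_nonneg (|ξ i| - 1), sq_abs (ξ i)]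
      have h2 : (0:ℝ) < π := Real.pi_pos
      rw [Real.norm_eq_abs, abs_of_nonneg (by positivity)]
      calc ‖fourierT f ξ‖ * (2 * π * |ξ i|) = π * ((2 * |ξ i|) * ‖fourierT f ξ‖) := by ring
        _ ≤ π * ((1 + (ξ i) ^ 2) * ‖fourierT f ξ‖) :=
            mul_le_mul_of_nonneg_left (mul_le_mul_of_nonneg_right h1 (norm_nonneg _)) h2.le
        _ = π * (‖fourierT f ξ‖ + (ξ i) ^ 2 * ‖fourierT f ξ‖) := by ring
  -- (II) : derivative identity
  have hII : ∀ y, ∀ i : Fin D,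
      ∫ ξ, ‖fourierT f ξ‖ * (2 * π * ξ i *
        Real.sin (Complex.arg (fourierT f ξ) + 2 * π * ⟪ξ, y⟫)) = -(pder i f y) := by
    intro y i
    set e := EuclideanSpace.single i (1:ℝ) with he
    have hlin : ∀ t : ℝ, Measurable fun ξ : EuclideanSpace ℝ (Fin D) =>
        Complex.arg (fourierT f ξ) + 2 * π * ⟪ξ, y⟫ + 2 * π * ξ i * t := fun t =>
      (hargm.add (continuous_const.mul
          (Continuous.inner continuous_id continuous_const)).measurable).add
        (((continuous_const.mul (EuclideanSpace.proj (𝕜 := ℝ) i).continuous).mul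
          continuous_const).measurable)
    have key := hasDerivAt_integral_of_dominated_loc_of_deriv_le (μ := volume) (x₀ := (0:ℝ))
      (s := Metric.ball (0:ℝ) 1)
      (F := fun t ξ => ‖fourierT f ξ‖ *
        Real.cos (Complex.arg (fourierT f ξ) + 2 * π * ⟪ξ, y⟫ + 2 * π * ξ i * t))
      (F' := fun t ξ => ‖fourierT f ξ‖ *
        (-Real.sin (Complex.arg (fourierT f ξ) + 2 * π * ⟪ξ, y⟫ + 2 * π * ξ i * t) *
          (2 * π * ξ i)))
      (bound := fun ξ => ‖fourierT f ξ‖ * (2 * π * |ξ i|)) (Metric.ball_mem_nhds _ one_pos)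
      (Filter.Eventually.of_forall fun t => by
        exact (hFhc.norm.measurable.mul
          (Real.measurable_cos.comp (hlin t))).aestronglyMeasurable)
      (by
        refine hfhat_int.norm.mono' (by exact (hFhc.norm.measurable.mul
          (Real.measurable_cos.comp (hlin 0))).aestronglyMeasurable)
          (Filter.Eventually.of_forall fun ξ => ?_)
        rw [Real.norm_eq_abs, abs_mul, abs_of_nonneg (norm_nonneg _)]
        calc ‖fourierT f ξ‖ * |Real.cos _| ≤ ‖fourierT f ξ‖ * 1 :=
              mul_le_mul_of_nonneg_left (Real.abs_cos_le_one _) (norm_nonneg _)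
          _ = ‖fourierT f ξ‖ := mul_one _)
      (by exact (hFhc.norm.measurable.mul (((Real.measurable_sin.comp (hlin 0)).neg).mul
        ((continuous_const.mul
          (EuclideanSpace.proj (𝕜 := ℝ) i).continuous).measurable))).aestronglyMeasurable)
      (Filter.Eventually.of_forall fun ξ => by
        intro t _
        rw [Real.norm_eq_abs, abs_mul, abs_of_nonneg (norm_nonneg _), abs_mul, abs_neg]
        refine mul_le_mul_of_nonneg_left ?_ (norm_nonneg _)
        have h1 : |2 * π * ξ i| = 2 * π * |ξ i| := by
          rw [abs_mul, abs_of_pos (by positivity : (0:ℝ) < 2 * π)]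
        rw [h1]
        exact mul_le_of_le_one_left (by positivity) (Real.abs_sin_le_one _))
      (habs i)
      (Filter.Eventually.of_forall fun ξ => by
        intro t _
        simpa using (((hasDerivAt_id t).const_mul (2 * π * ξ i)).const_add
          (Complex.arg (fourierT f ξ) + 2 * π * ⟪ξ, y⟫)).cos.const_mul ‖fourierT f ξ‖)
    obtain ⟨-, hderiv⟩ := key
    have hfun : (fun t : ℝ => ∫ ξ, ‖fourierT f ξ‖ *
        Real.cos (Complex.arg (fourierT f ξ) + 2 * π * ⟪ξ, y⟫ + 2 * π * ξ i * t)) =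
        fun t => f (y + t • e) := by
      funext t
      rw [← hI (y + t • e)]
      refine integral_congr_ae (Filter.Eventually.of_forall fun ξ => ?_)
      have hin : 2 * π * ⟪ξ, y + t • e⟫ = 2 * π * ⟪ξ, y⟫ + 2 * π * ξ i * t := by
        simp [he, inner_add_right, real_inner_smul_right, EuclideanSpace.inner_single_right]
        ring
      simp only [hin, add_assoc]
    rw [hfun] at hderiv
    have hd2 : HasDerivAt (fun t : ℝ => f (y + t • e)) (pder i f y) 0 := by
      have hc : HasDerivAt (fun t : ℝ => y + t • e) e 0 := by
        simpa using ((hasDerivAt_id (0:ℝ)).smul_const e).const_add y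
      have hfd : HasFDerivAt f (fderiv ℝ f y) (y + (0:ℝ) • e) := by
        simpa using (hf1.differentiable one_ne_zero y).hasFDerivAt
      simpa [pder, he, Function.comp_def] using hfd.comp_hasDerivAt 0 hc
    have h4 : (∫ ξ, ‖fourierT f ξ‖ *
        (-Real.sin (Complex.arg (fourierT f ξ) + 2 * π * ⟪ξ, y⟫ + 2 * π * ξ i * 0) *
          (2 * π * ξ i))) = pder i f y := hderiv.unique hd2
    have h5 : (fun ξ : EuclideanSpace ℝ (Fin D) => ‖fourierT f ξ‖ * (2 * π * ξ i *
        Real.sin (Complex.arg (fourierT f ξ) + 2 * π * ⟪ξ, y⟫))) =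
        fun ξ => -(‖fourierT f ξ‖ *
        (-Real.sin (Complex.arg (fourierT f ξ) + 2 * π * ⟪ξ, y⟫ + 2 * π * ξ i * 0) *
          (2 * π * ξ i))) := by
      funext ξ; simp only [mul_zero, add_zero]; ring
    rw [h5, integral_neg, h4]
  rcases hC0.lt_or_eq with hCpos | hCz
  · -- main case : 0 < C
    set dens : EuclideanSpace ℝ (Fin D) → NNReal := fun ξ => ‖fourierT f ξ‖₊ with hdens
    have hdensm : Measurable dens := hFhc.measurable.nnnorm
    set ν : Measure (EuclideanSpace ℝ (Fin D)) :=
      volume.withDensity (fun ξ => (dens ξ : ENNReal)) with hν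
    set T : EuclideanSpace ℝ (Fin D) → EuclideanSpace ℝ (Fin D) × ℝ × ℝ :=
      fun ξ => ((2 * π) • ξ, Complex.arg (fourierT f ξ), C) with hT
    have hTm : Measurable T :=
      ((continuous_id.const_smul (2 * π)).measurable).prodMk (hargm.prodMk measurable_const)
    set μ := (ENNReal.ofReal C)⁻¹ • ν with hμ
    have hν_univ : ν Set.univ = ENNReal.ofReal C := by
      rw [hν, withDensity_apply _ MeasurableSet.univ, setLIntegral_univ, hCdef,
        ofReal_integral_eq_lintegral_ofReal hfhat_int.norm
          (Filter.Eventually.of_forall fun ξ => norm_nonneg _)]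
      refine lintegral_congr fun x => ?_
      rw [← coe_nnnorm, ENNReal.ofReal_coe_nnreal]
    have hCne : ENNReal.ofReal C ≠ 0 := (ENNReal.ofReal_pos.2 hCpos).ne'
    have hμprob : IsProbabilityMeasure μ := by
      constructor
      rw [hμ, Measure.smul_apply, hν_univ, smul_eq_mul,
        ENNReal.inv_mul_cancel hCne ENNReal.ofReal_ne_top]
    have htrans : ∀ g : EuclideanSpace ℝ (Fin D) × ℝ × ℝ → ℝ, Measurable g →
        ∫ p, g p ∂(μ.map T) = C⁻¹ * ∫ ξ, ‖fourierT f ξ‖ * g (T ξ) := by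
      intro g hg
      rw [integral_map hTm.aemeasurable hg.aestronglyMeasurable, hμ, integral_smul_measure, hν,
        integral_withDensity_eq_integral_smul hdensm, smul_eq_mul]
      rw [ENNReal.toReal_inv, ENNReal.toReal_ofReal hCpos.le]
      congr 1
    refine ⟨μ.map T, Measure.isProbabilityMeasure_map hTm.aemeasurable, ?_, ?_, ?_, ?_, ?_⟩
    · refine (ae_map_iff hTm.aemeasurable ?_).2 (Filter.Eventually.of_forall fun ξ => ?_)
      · exact measurableSet_le
          ((continuous_abs.comp (continuous_snd.comp continuous_snd)).measurable) measurable_const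
      · simp [hT, abs_of_nonneg hC0]
    · intro y
      have hg : Measurable fun p : EuclideanSpace ℝ (Fin D) × ℝ × ℝ =>
          p.2.2 * Real.cos (p.2.1 + ⟪p.1, y⟫) :=
        ((continuous_snd.comp continuous_snd).mul (Real.continuous_cos.comp
          ((continuous_fst.comp continuous_snd).add
            (Continuous.inner continuous_fst continuous_const)))).measurable
      rw [htrans _ hg]
      have hpt : ∀ ξ : EuclideanSpace ℝ (Fin D),
          ‖fourierT f ξ‖ * ((T ξ).2.2 * Real.cos ((T ξ).2.1 + ⟪(T ξ).1, y⟫)) =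
          C * (‖fourierT f ξ‖ *
            Real.cos (Complex.arg (fourierT f ξ) + 2 * π * ⟪ξ, y⟫)) := fun ξ => by
        simp only [hT]
        rw [real_inner_smul_left]; ring
      rw [integral_congr_ae (Filter.Eventually.of_forall hpt), integral_const_mul, hI y,
        ← mul_assoc, inv_mul_cancel₀ hCpos.ne', one_mul]
    · intro y i
      have hg : Measurable fun p : EuclideanSpace ℝ (Fin D) × ℝ × ℝ =>
          p.2.2 * p.1 i * Real.sin (p.2.1 + ⟪p.1, y⟫) :=
        (((continuous_snd.comp continuous_snd).mul
          ((EuclideanSpace.proj (𝕜 := ℝ) i).continuous.comp continuous_fst)).mul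
          (Real.continuous_sin.comp ((continuous_fst.comp continuous_snd).add
            (Continuous.inner continuous_fst continuous_const)))).measurable
      rw [htrans _ hg]
      have hpt : ∀ ξ : EuclideanSpace ℝ (Fin D),
          ‖fourierT f ξ‖ * ((T ξ).2.2 * (T ξ).1 i * Real.sin ((T ξ).2.1 + ⟪(T ξ).1, y⟫)) =
          C * (‖fourierT f ξ‖ * (2 * π * ξ i *
            Real.sin (Complex.arg (fourierT f ξ) + 2 * π * ⟪ξ, y⟫))) := fun ξ => by
        simp only [hT]
        rw [real_inner_smul_left]
        simp only [PiLp.smul_apply, smul_eq_mul]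
        ring
      rw [integral_congr_ae (Filter.Eventually.of_forall hpt), integral_const_mul, hII y i,
        ← mul_assoc, inv_mul_cancel₀ hCpos.ne', one_mul]
    · have hg : Measurable fun p : EuclideanSpace ℝ (Fin D) × ℝ × ℝ => p.2.2 ^ 2 :=
        ((continuous_snd.comp continuous_snd).pow 2).measurable
      rw [htrans _ hg]
      have hpt : ∀ ξ : EuclideanSpace ℝ (Fin D),
          ‖fourierT f ξ‖ * ((T ξ).2.2) ^ 2 = C ^ 2 * ‖fourierT f ξ‖ := fun ξ => by
        simp only [hT]; ring
      rw [integral_congr_ae (Filter.Eventually.of_forall hpt), integral_const_mul, ← hCdef]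
      apply le_of_eq
      field_simp
      all_goals ring
    · intro i
      have hg : Measurable fun p : EuclideanSpace ℝ (Fin D) × ℝ × ℝ =>
          p.2.2 ^ 2 * (p.1 i) ^ 2 :=
        (((continuous_snd.comp continuous_snd).pow 2).mul
          (((EuclideanSpace.proj (𝕜 := ℝ) i).continuous.comp continuous_fst).pow 2)).measurable
      rw [htrans _ hg]
      have hpt : ∀ ξ : EuclideanSpace ℝ (Fin D),
          ‖fourierT f ξ‖ * (((T ξ).2.2) ^ 2 * ((T ξ).1 i) ^ 2) =
          (C ^ 2 * (4 * π ^ 2)) * ((ξ i) ^ 2 * ‖fourierT f ξ‖) := fun ξ => by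
        simp only [hT, PiLp.smul_apply, smul_eq_mul]
        ring
      rw [integral_congr_ae (Filter.Eventually.of_forall hpt), integral_const_mul]
      apply le_of_eq
      field_simp
      all_goals ring
  · -- degenerate case : C = 0
    have hFh0 : (fun ξ : EuclideanSpace ℝ (Fin D) => ‖fourierT f ξ‖) =ᵐ[volume] 0 :=
      (integral_eq_zero_iff_of_nonneg (fun ξ => norm_nonneg _) hfhat_int.norm).mp
        (by rw [← hCdef]; exact hCz.symm)
    have hzero : ∀ g : EuclideanSpace ℝ (Fin D) → ℝ, ∫ ξ, ‖fourierT f ξ‖ * g ξ = 0 := by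
      intro g
      have h : (fun ξ : EuclideanSpace ℝ (Fin D) => ‖fourierT f ξ‖ * g ξ) =ᵐ[volume]
          fun _ => 0 := hFh0.mono fun ξ h => by
        simp only [Pi.zero_apply] at h; simp [h]
      rw [integral_congr_ae h, integral_zero]
    have hf0 : ∀ y, f y = 0 := fun y => by rw [← hI y]; exact hzero _
    have hp0 : ∀ y, ∀ i : Fin D, pder i f y = 0 := fun y i => by
      have h0 : ∫ ξ, ‖fourierT f ξ‖ * (2 * π * ξ i *
          Real.sin (Complex.arg (fourierT f ξ) + 2 * π * ⟪ξ, y⟫)) = (0:ℝ) := hzero _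
      linarith [hII y i, h0]
    refine ⟨Measure.dirac ((0 : EuclideanSpace ℝ (Fin D)), (0:ℝ), (0:ℝ)),
      inferInstance, ?_, ?_, ?_, ?_, ?_⟩
    · refine (ae_dirac_iff ?_).2 ?_
      · exact measurableSet_le
          ((continuous_abs.comp (continuous_snd.comp continuous_snd)).measurable) measurable_const
      · simp [← hCz]
    · intro y
      rw [integral_dirac]
      simp [hf0 y]
    · intro y i
      rw [integral_dirac]
      simp [hp0 y i]
    · rw [integral_dirac]
      simpa using sq_nonneg C
    · intro i
      rw [integral_dirac]
      simp [← hCz]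
end

section
/- Let D ≥ 1, n ≥ 1, let μ be a Borel probability measure on ℝ^D, and let f : ℝ^D → ℝ be continuously differentiable. On a probability space, let (A_i, B_i, W_i), i = 1,…,n, be i.i.d. random variables with values in ℝ^D × ℝ × ℝ such that E[W₁²] < ∞ and E[W₁² A_{1,i}²] < ∞ for each i = 1,…,D, and such that for every y ∈ ℝ^D: E[W₁ cos(B₁ + A₁·y)] = f(y) and E[W₁ A_{1,i} sin(B₁ + A₁·y)] = −∂_i f(y) for each i. Define the random function Φ(y) := (1/n) Σ_{k=1}^n W_k cos(B_k + A_k·y). Then E[ ‖f − Φ‖²_{L²(μ)} + Σ_{i=1}^{D} ‖∂_i f − ∂_i Φ‖²_{L²(μ)} ] ≤ ( E[W₁²] + Σ_{i=1}^{D} E[W₁² A_{1,i}²] ) / n. -/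
open MeasureTheory
open scoped RealInnerProductSpace BigOperators ProbabilityTheory

section helpers
open ProbabilityTheory

lemma pder_cos_sum {D : ℕ} (i : Fin D) {n : ℕ} (c : ℝ)
    (a : Fin n → EuclideanSpace ℝ (Fin D)) (b w : Fin n → ℝ)
    (y : EuclideanSpace ℝ (Fin D)) :
    pder i (fun y => c * ∑ k, w k * Real.cos (b k + ⟪a k, y⟫)) y
      = c * ∑ k, -(w k * a k i * Real.sin (b k + ⟪a k, y⟫)) := by
  have hk : ∀ k : Fin n, HasFDerivAt (fun y => w k * Real.cos (b k + ⟪a k, y⟫))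
      ((w k * -Real.sin (b k + ⟪a k, y⟫)) • (innerSL ℝ (a k))) y := by
    intro k
    have h1 : HasFDerivAt (fun y : EuclideanSpace ℝ (Fin D) => b k + ⟪a k, y⟫)
        (innerSL ℝ (a k)) y := ((innerSL ℝ (a k)).hasFDerivAt).const_add (b k)
    have h2 := (Real.hasDerivAt_cos (b k + ⟪a k, y⟫)).comp_hasFDerivAt y h1
    have h3 := h2.const_mul (w k)
    simpa [smul_smul] using h3
  have hsum : HasFDerivAt (fun y => c * ∑ k, w k * Real.cos (b k + ⟪a k, y⟫))
      (c • ∑ k, (w k * -Real.sin (b k + ⟪a k, y⟫)) • (innerSL ℝ (a k))) y :=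
    (HasFDerivAt.fun_sum (fun k _ => hk k)).const_mul c
  rw [pder, hsum.fderiv]
  simp only [ContinuousLinearMap.smul_apply, ContinuousLinearMap.sum_apply,
    ContinuousLinearMap.smul_apply, innerSL_apply_apply, smul_eq_mul]
  congr 1
  refine Finset.sum_congr rfl (fun k _ => ?_)
  rw [EuclideanSpace.inner_single_right]
  simp [starRingEnd_apply]
  ring

variable {Ω : Type*} [MeasureSpace Ω] [IsProbabilityMeasure (ℙ : Measure Ω)]

lemma mc_var_bound {n : ℕ} (hn : 1 ≤ n) (Z : Fin n → Ω → ℝ) (hmeas : ∀ k, Measurable (Z k))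
    (hindep : iIndepFun Z ℙ)
    (hident : ∀ k, IdentDistrib (Z k) (Z ⟨0, hn⟩) ℙ ℙ)
    (hsq : Integrable (fun ω => (Z ⟨0, hn⟩ ω) ^ 2)) :
    Integrable (fun ω => ((1 / n : ℝ) * ∑ k, ((∫ ω', Z ⟨0, hn⟩ ω') - Z k ω)) ^ 2) ∧
    ∫ ω, ((1 / n : ℝ) * ∑ k, ((∫ ω', Z ⟨0, hn⟩ ω') - Z k ω)) ^ 2 ≤
      (∫ ω, (Z ⟨0, hn⟩ ω) ^ 2) / n := by
  set z : Fin n := ⟨0, hn⟩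
  set m : ℝ := ∫ ω', Z z ω' with hm
  have hL2 : ∀ k, MemLp (Z k) 2 ℙ := by
    intro k
    have h0 : MemLp (Z z) 2 ℙ :=
      (memLp_two_iff_integrable_sq (hmeas z).aestronglyMeasurable).2 hsq
    exact ((hident k).symm.memLp_iff).1 h0
  have hInt : ∀ k, Integrable (Z k) ℙ := fun k => (hL2 k).integrable one_le_two
  have hmk : ∀ k, ∫ ω, Z k ω = m := fun k => (hident k).integral_eq
  have hS : ∀ ω, ((1 / n : ℝ) * ∑ k, (m - Z k ω)) ^ 2
      = (1 / (n:ℝ)^2) * ((∑ k, Z k ω) - ∫ ω', ∑ k, Z k ω') ^ 2 := by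
    intro ω
    have hInt' : ∫ ω', ∑ k, Z k ω' = n * m := by
      rw [integral_finset_sum _ (fun k _ => hInt k)]
      simp [hmk, Finset.sum_const]
    rw [hInt']
    have : ∑ k, (m - Z k ω) = n * m - ∑ k, Z k ω := by
      rw [Finset.sum_sub_distrib]
      simp [Finset.sum_const]
    rw [this]
    ring
  have hL2sum : MemLp (∑ k, Z k) 2 ℙ := memLp_finset_sum' _ (fun k _ => hL2 k)
  have hIntsum : Integrable (fun ω => ((∑ k, Z k ω) - ∫ ω', ∑ k, Z k ω') ^ 2) ℙ := by
    have := (hL2sum.sub (memLp_const (∫ ω', ∑ k, Z k ω'))).integrable_sq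
    simpa [Finset.sum_apply] using this
  constructor
  · have := hIntsum.const_mul (1 / (n:ℝ)^2)
    refine this.congr ?_
    filter_upwards with ω
    rw [hS ω]
  · have hvar : ∫ ω, ((∑ k, Z k ω) - ∫ ω', ∑ k, Z k ω') ^ 2 = variance (∑ k, Z k) ℙ := by
      rw [variance_eq_integral hL2sum.aestronglyMeasurable.aemeasurable]
      congr 1
      funext ω
      simp [Finset.sum_apply]
    have hvs : variance (∑ k, Z k) ℙ = ∑ k : Fin n, variance (Z k) ℙ := by
      refine IndepFun.variance_sum (fun k _ => hL2 k) ?_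
      intro i _ j _ hij
      exact hindep.indepFun hij
    have hvk : ∀ k : Fin n, variance (Z k) ℙ = variance (Z z) ℙ := fun k =>
      (hident k).variance_eq
    have hvle : variance (Z z) ℙ ≤ ∫ ω, (Z z ω) ^ 2 := by
      have := variance_le_expectation_sq (hmeas z).aestronglyMeasurable (μ := ℙ)
      simpa [Pi.pow_apply] using this
    have hnpos : (0:ℝ) < n := by exact_mod_cast hn
    calc ∫ ω, ((1 / n : ℝ) * ∑ k, (m - Z k ω)) ^ 2
        = ∫ ω, (1 / (n:ℝ)^2) * ((∑ k, Z k ω) - ∫ ω', ∑ k, Z k ω') ^ 2 := by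
          congr 1; funext ω; exact hS ω
      _ = (1 / (n:ℝ)^2) * ∫ ω, ((∑ k, Z k ω) - ∫ ω', ∑ k, Z k ω') ^ 2 := by
          rw [integral_const_mul]
      _ = (1 / (n:ℝ)^2) * ((n:ℝ) * variance (Z z) ℙ) := by
          rw [hvar, hvs]
          simp [hvk, Finset.sum_const, mul_comm]
      _ = variance (Z z) ℙ / n := by field_simp
      _ ≤ (∫ ω, (Z z ω) ^ 2) / n := by gcongr

lemma mc_term {n : ℕ} (hn : 1 ≤ n) {E : Type*} [MeasurableSpace E]
    (V : Fin n → Ω → E) (hVmeas : ∀ k, Measurable (V k))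
    (hVindep : iIndepFun V ℙ)
    (hVident : ∀ k, IdentDistrib (V k) (V ⟨0, hn⟩) ℙ ℙ)
    (φ ψ : E → ℝ) (hφ : Measurable φ)
    (hψInt : Integrable (fun ω => ψ (V ⟨0, hn⟩ ω)))
    (hle : ∀ e, (φ e) ^ 2 ≤ ψ e) :
    Integrable (fun ω => ((1 / n : ℝ) * ∑ k, ((∫ ω', φ (V ⟨0, hn⟩ ω')) - φ (V k ω))) ^ 2) ∧
    ∫ ω, ((1 / n : ℝ) * ∑ k, ((∫ ω', φ (V ⟨0, hn⟩ ω')) - φ (V k ω))) ^ 2 ≤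
      (∫ ω, ψ (V ⟨0, hn⟩ ω)) / n := by
  set z : Fin n := ⟨0, hn⟩
  set Z : Fin n → Ω → ℝ := fun k ω => φ (V k ω) with hZ
  have hmeas : ∀ k, Measurable (Z k) := fun k => hφ.comp (hVmeas k)
  have hindep : iIndepFun Z ℙ :=
    hVindep.comp (fun _ => φ) (fun _ => hφ)
  have hident : ∀ k, IdentDistrib (Z k) (Z z) ℙ ℙ := fun k => (hVident k).comp hφ
  have hsq : Integrable (fun ω => (Z z ω) ^ 2) := by
    refine Integrable.mono' hψInt ((hmeas z).pow_const 2).aestronglyMeasurable ?_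
    filter_upwards with ω
    rw [Real.norm_eq_abs, abs_of_nonneg (sq_nonneg _)]
    exact hle _
  obtain ⟨h1, h2⟩ := mc_var_bound hn Z hmeas hindep hident hsq
  refine ⟨h1, h2.trans ?_⟩
  have hnpos : (0:ℝ) < n := by exact_mod_cast hn
  exact div_le_div_of_nonneg_right (integral_mono hsq hψInt (fun ω => hle _)) hnpos.le

lemma lintegral_term_bound {E : Type*} [MeasurableSpace E] {μ : Measure E}
    [IsProbabilityMeasure μ] (q : Ω → E → ℝ) (hq : Measurable (Function.uncurry q))
    (hqnn : ∀ ω y, 0 ≤ q ω y) (c : ℝ)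
    (hbc : ∀ y, Integrable (fun ω => q ω y) ∧ ∫ ω, q ω y ≤ c) :
    ∫⁻ ω, ENNReal.ofReal (∫ y, q ω y ∂μ) ≤ ENNReal.ofReal c := by
  have step1 : ∀ ω, ENNReal.ofReal (∫ y, q ω y ∂μ) ≤ ∫⁻ y, ENNReal.ofReal (q ω y) ∂μ := by
    intro ω
    have hmω : AEStronglyMeasurable (q ω) μ :=
      (hq.comp measurable_prodMk_left).aestronglyMeasurable
    rw [integral_eq_lintegral_of_nonneg_ae (Filter.Eventually.of_forall (hqnn ω)) hmω]
    exact ENNReal.ofReal_toReal_le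
  calc ∫⁻ ω, ENNReal.ofReal (∫ y, q ω y ∂μ)
      ≤ ∫⁻ ω, ∫⁻ y, ENNReal.ofReal (q ω y) ∂μ := lintegral_mono step1
    _ = ∫⁻ y, ∫⁻ ω, ENNReal.ofReal (q ω y) ∂ℙ ∂μ := by
        apply lintegral_lintegral_swap
        exact (ENNReal.measurable_ofReal.comp hq).aemeasurable
    _ ≤ ∫⁻ y, ENNReal.ofReal c ∂μ := by
        refine lintegral_mono (fun y => ?_)
        rw [← ofReal_integral_eq_lintegral_ofReal (hbc y).1
          (Filter.Eventually.of_forall (fun ω => hqnn ω y))]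
        exact ENNReal.ofReal_le_ofReal (hbc y).2
    _ = ENNReal.ofReal c := by simp

end helpers

/-- Monte Carlo variance estimate, jointly for a function and its first
partial derivatives in `L²(μ)`, for i.i.d. random cosine features `(Aₖ, Bₖ, Wₖ)` whose
single-feature expectations reproduce `f` and `−∂_i f`. -/
theorem monte_carlo_joint_L2_estimate
    {D : ℕ} (hD : 1 ≤ D) (n : ℕ) (hn : 1 ≤ n)
    (μ : Measure (EuclideanSpace ℝ (Fin D))) [IsProbabilityMeasure μ]
    (f : EuclideanSpace ℝ (Fin D) → ℝ) (hf1 : ContDiff ℝ 1 f)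
    {Ω : Type*} [MeasureSpace Ω] [IsProbabilityMeasure (ℙ : Measure Ω)]
    (V : Fin n → Ω → (EuclideanSpace ℝ (Fin D)) × ℝ × ℝ)
    (hVmeas : ∀ k, Measurable (V k))
    (hVindep : ProbabilityTheory.iIndepFun V ℙ)
    (hVident : ∀ k, ProbabilityTheory.IdentDistrib (V k) (V ⟨0, hn⟩) ℙ ℙ)
    (hW2 : Integrable (fun ω => ((V ⟨0, hn⟩ ω).2.2) ^ 2))
    (hWA2 : ∀ i : Fin D,
      Integrable (fun ω => ((V ⟨0, hn⟩ ω).2.2) ^ 2 * ((V ⟨0, hn⟩ ω).1 i) ^ 2))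
    (hmean : ∀ y, ∫ ω, (V ⟨0, hn⟩ ω).2.2 *
      Real.cos ((V ⟨0, hn⟩ ω).2.1 + ⟪(V ⟨0, hn⟩ ω).1, y⟫) = f y)
    (hmeanDeriv : ∀ y, ∀ i : Fin D, ∫ ω, (V ⟨0, hn⟩ ω).2.2 * ((V ⟨0, hn⟩ ω).1 i) *
      Real.sin ((V ⟨0, hn⟩ ω).2.1 + ⟪(V ⟨0, hn⟩ ω).1, y⟫) = -(pder i f y)) :
    -- the random function Φ_ω(y) = (1/n) Σₖ Wₖ cos(Bₖ + Aₖ·y)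
    let Φ : Ω → EuclideanSpace ℝ (Fin D) → ℝ := fun ω y =>
      (1 / n) * ∑ k, (V k ω).2.2 * Real.cos ((V k ω).2.1 + ⟪(V k ω).1, y⟫)
    ∫ ω, ((∫ y, (f y - Φ ω y) ^ 2 ∂μ) +
        ∑ i : Fin D, ∫ y, (pder i f y - pder i (Φ ω) y) ^ 2 ∂μ) ≤
      ((∫ ω, ((V ⟨0, hn⟩ ω).2.2) ^ 2) +
        ∑ i : Fin D, ∫ ω, ((V ⟨0, hn⟩ ω).2.2) ^ 2 * ((V ⟨0, hn⟩ ω).1 i) ^ 2) / n := by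
  intro Φ
  have hn0 : (n:ℝ) ≠ 0 := by
    have : (0:ℝ) < n := by exact_mod_cast hn
    exact ne_of_gt this
  -- explicit formula for the partial derivatives of Φ
  have hP : ∀ (i : Fin D) (ω : Ω) (y : EuclideanSpace ℝ (Fin D)),
      pder i (Φ ω) y = (1 / n : ℝ) *
        ∑ k, -((V k ω).2.2 * (V k ω).1 i *
          Real.sin ((V k ω).2.1 + ⟪(V k ω).1, y⟫)) := by
    intro i ω y
    exact pder_cos_sum i (1 / n : ℝ) (fun k => (V k ω).1) (fun k => (V k ω).2.1)
      (fun k => (V k ω).2.2) y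
  simp only [hP]
  -- measurability of building blocks
  have hinner : ∀ k : Fin n, Measurable
      (fun p : Ω × EuclideanSpace ℝ (Fin D) => (⟪(V k p.1).1, p.2⟫ : ℝ)) := by
    intro k
    exact continuous_inner.measurable.comp
      ((((hVmeas k).comp measurable_fst).fst).prodMk measurable_snd)
  have hq0meas : Measurable (Function.uncurry
      (fun (ω : Ω) (y : EuclideanSpace ℝ (Fin D)) => (f y - Φ ω y) ^ 2)) := by
    apply Measurable.pow_const
    apply Measurable.sub
    · exact hf1.continuous.measurable.comp measurable_snd
    · apply Measurable.const_mul
      apply Finset.measurable_sum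
      intro k _
      exact (((hVmeas k).comp measurable_fst).snd.snd).mul
        (Real.continuous_cos.measurable.comp
          ((((hVmeas k).comp measurable_fst).snd.fst).add (hinner k)))
  have hpdf : ∀ i : Fin D, Continuous (pder i f) := by
    intro i
    exact (ContinuousLinearMap.apply ℝ ℝ (EuclideanSpace.single i (1:ℝ))).continuous.comp
      (hf1.continuous_fderiv one_ne_zero)
  have hqimeas : ∀ i : Fin D, Measurable (Function.uncurry
      (fun (ω : Ω) (y : EuclideanSpace ℝ (Fin D)) =>
        (pder i f y - (1 / n : ℝ) * ∑ k, -((V k ω).2.2 * (V k ω).1 i *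
          Real.sin ((V k ω).2.1 + ⟪(V k ω).1, y⟫))) ^ 2)) := by
    intro i
    apply Measurable.pow_const
    apply Measurable.sub
    · exact (hpdf i).measurable.comp measurable_snd
    · apply Measurable.const_mul
      apply Finset.measurable_sum
      intro k _
      apply Measurable.neg
      exact ((((hVmeas k).comp measurable_fst).snd.snd).mul
          (Measurable.comp (measurable_pi_apply i) (Measurable.comp (WithLp.measurable_ofLp 2 (Fin D → ℝ)) (((hVmeas k).comp measurable_fst).fst)))).mul
        (Real.continuous_sin.measurable.comp
          ((((hVmeas k).comp measurable_fst).snd.fst).add (hinner k)))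
  -- per-y bounds for the zeroth term
  have hbq0 : ∀ y, Integrable (fun ω => (f y - Φ ω y) ^ 2) ∧
      ∫ ω, (f y - Φ ω y) ^ 2 ≤ (∫ ω, ((V ⟨0, hn⟩ ω).2.2) ^ 2) / n := by
    intro y
    have hφ : Measurable (fun e : (EuclideanSpace ℝ (Fin D)) × ℝ × ℝ =>
        e.2.2 * Real.cos (e.2.1 + ⟪e.1, y⟫)) := by
      exact (measurable_snd.snd).mul (Real.continuous_cos.measurable.comp
        ((measurable_snd.fst).add
          (continuous_inner.measurable.comp (measurable_fst.prodMk measurable_const))))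
    have hle : ∀ e : (EuclideanSpace ℝ (Fin D)) × ℝ × ℝ,
        (e.2.2 * Real.cos (e.2.1 + ⟪e.1, y⟫)) ^ 2 ≤ e.2.2 ^ 2 := by
      intro e
      rw [mul_pow]
      exact mul_le_of_le_one_right (sq_nonneg _) (Real.cos_sq_le_one _)
    obtain ⟨h1, h2⟩ := mc_term hn V hVmeas hVindep hVident
      (fun e => e.2.2 * Real.cos (e.2.1 + ⟪e.1, y⟫)) (fun e => e.2.2 ^ 2) hφ hW2 hle
    rw [hmean y] at h1 h2
    have hrw : (fun ω => (f y - Φ ω y) ^ 2) = (fun ω =>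
        ((1 / n : ℝ) * ∑ k, (f y -
          (V k ω).2.2 * Real.cos ((V k ω).2.1 + ⟪(V k ω).1, y⟫))) ^ 2) := by
      funext ω
      congr 1
      rw [Finset.sum_sub_distrib, Finset.sum_const, Finset.card_univ, Fintype.card_fin]
      show f y - (1 / n : ℝ) * _ = _
      field_simp
      ring
    rw [hrw]
    exact ⟨h1, h2⟩
  -- per-y bounds for the derivative terms
  have hbqi : ∀ (i : Fin D) y, Integrable (fun ω =>
        (pder i f y - (1 / n : ℝ) * ∑ k, -((V k ω).2.2 * (V k ω).1 i *
          Real.sin ((V k ω).2.1 + ⟪(V k ω).1, y⟫))) ^ 2) ∧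
      ∫ ω, (pder i f y - (1 / n : ℝ) * ∑ k, -((V k ω).2.2 * (V k ω).1 i *
          Real.sin ((V k ω).2.1 + ⟪(V k ω).1, y⟫))) ^ 2 ≤
        (∫ ω, ((V ⟨0, hn⟩ ω).2.2) ^ 2 * ((V ⟨0, hn⟩ ω).1 i) ^ 2) / n := by
    intro i y
    have hφ : Measurable (fun e : (EuclideanSpace ℝ (Fin D)) × ℝ × ℝ =>
        -(e.2.2 * e.1 i * Real.sin (e.2.1 + ⟪e.1, y⟫))) := by
      apply Measurable.neg
      exact ((measurable_snd.snd).mul (Measurable.comp (measurable_pi_apply i) (Measurable.comp (WithLp.measurable_ofLp 2 (Fin D → ℝ)) measurable_fst))).mul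
        (Real.continuous_sin.measurable.comp
          ((measurable_snd.fst).add
            (continuous_inner.measurable.comp (measurable_fst.prodMk measurable_const))))
    have hle : ∀ e : (EuclideanSpace ℝ (Fin D)) × ℝ × ℝ,
        (-(e.2.2 * e.1 i * Real.sin (e.2.1 + ⟪e.1, y⟫))) ^ 2 ≤ e.2.2 ^ 2 * (e.1 i) ^ 2 := by
      intro e
      have h1 : (e.2.2 * e.1 i) ^ 2 * Real.sin (e.2.1 + ⟪e.1, y⟫) ^ 2
          ≤ (e.2.2 * e.1 i) ^ 2 :=
        mul_le_of_le_one_right (sq_nonneg _) (Real.sin_sq_le_one _)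
      calc (-(e.2.2 * e.1 i * Real.sin (e.2.1 + ⟪e.1, y⟫))) ^ 2
          = (e.2.2 * e.1 i) ^ 2 * Real.sin (e.2.1 + ⟪e.1, y⟫) ^ 2 := by ring
        _ ≤ (e.2.2 * e.1 i) ^ 2 := h1
        _ = e.2.2 ^ 2 * (e.1 i) ^ 2 := by ring
    obtain ⟨h1, h2⟩ := mc_term hn V hVmeas hVindep hVident
      (fun e => -(e.2.2 * e.1 i * Real.sin (e.2.1 + ⟪e.1, y⟫)))
      (fun e => e.2.2 ^ 2 * (e.1 i) ^ 2) hφ (hWA2 i) hle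
    have hmint : ∫ ω', -((V ⟨0, hn⟩ ω').2.2 * (V ⟨0, hn⟩ ω').1 i *
        Real.sin ((V ⟨0, hn⟩ ω').2.1 + ⟪(V ⟨0, hn⟩ ω').1, y⟫)) = pder i f y := by
      rw [integral_neg, hmeanDeriv y i, neg_neg]
    rw [hmint] at h1 h2
    have hrw : (fun ω => (pder i f y - (1 / n : ℝ) * ∑ k, -((V k ω).2.2 * (V k ω).1 i *
          Real.sin ((V k ω).2.1 + ⟪(V k ω).1, y⟫))) ^ 2) = (fun ω =>
        ((1 / n : ℝ) * ∑ k, (pder i f y - -((V k ω).2.2 * (V k ω).1 i *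
          Real.sin ((V k ω).2.1 + ⟪(V k ω).1, y⟫)))) ^ 2) := by
      funext ω
      congr 1
      rw [Finset.sum_sub_distrib, Finset.sum_const, Finset.card_univ, Fintype.card_fin]
      field_simp
      ring
    rw [hrw]
    exact ⟨h1, h2⟩
  -- nonnegativity of the constants
  set c0 : ℝ := ∫ ω, ((V ⟨0, hn⟩ ω).2.2) ^ 2 with hc0
  set ci : Fin D → ℝ := fun i => ∫ ω, ((V ⟨0, hn⟩ ω).2.2) ^ 2 * ((V ⟨0, hn⟩ ω).1 i) ^ 2
    with hci
  have hc0nn : 0 ≤ c0 := integral_nonneg (fun ω => sq_nonneg _)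
  have hcinn : ∀ i, 0 ≤ ci i := fun i =>
    integral_nonneg (fun ω => mul_nonneg (sq_nonneg _) (sq_nonneg _))
  -- strong measurability of the ω-integrands
  have hT0sm : StronglyMeasurable (fun ω => ∫ y, (f y - Φ ω y) ^ 2 ∂μ) :=
    hq0meas.stronglyMeasurable.integral_prod_right
  have hTism : ∀ i : Fin D, StronglyMeasurable (fun ω =>
      ∫ y, (pder i f y - (1 / n : ℝ) * ∑ k, -((V k ω).2.2 * (V k ω).1 i *
        Real.sin ((V k ω).2.1 + ⟪(V k ω).1, y⟫))) ^ 2 ∂μ) := fun i =>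
    (hqimeas i).stronglyMeasurable.integral_prod_right
  have hHnn : ∀ ω, 0 ≤ (∫ y, (f y - Φ ω y) ^ 2 ∂μ) +
      ∑ i : Fin D, ∫ y, (pder i f y - (1 / n : ℝ) * ∑ k, -((V k ω).2.2 * (V k ω).1 i *
        Real.sin ((V k ω).2.1 + ⟪(V k ω).1, y⟫))) ^ 2 ∂μ := by
    intro ω
    apply add_nonneg (integral_nonneg (fun y => sq_nonneg _))
    exact Finset.sum_nonneg (fun i _ => integral_nonneg (fun y => sq_nonneg _))
  have hHsm : AEStronglyMeasurable (fun ω => (∫ y, (f y - Φ ω y) ^ 2 ∂μ) +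
      ∑ i : Fin D, ∫ y, (pder i f y - (1 / n : ℝ) * ∑ k, -((V k ω).2.2 * (V k ω).1 i *
        Real.sin ((V k ω).2.1 + ⟪(V k ω).1, y⟫))) ^ 2 ∂μ) ℙ := by
    exact (hT0sm.add (Finset.stronglyMeasurable_fun_sum _
      (fun i _ => hTism i))).aestronglyMeasurable
  rw [integral_eq_lintegral_of_nonneg_ae (Filter.Eventually.of_forall hHnn) hHsm]
  -- lintegral bounds
  have hb0 : ∫⁻ ω, ENNReal.ofReal (∫ y, (f y - Φ ω y) ^ 2 ∂μ)
      ≤ ENNReal.ofReal (c0 / n) :=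
    lintegral_term_bound _ hq0meas (fun ω y => sq_nonneg _) _ hbq0
  have hbi : ∀ i : Fin D, ∫⁻ ω, ENNReal.ofReal
      (∫ y, (pder i f y - (1 / n : ℝ) * ∑ k, -((V k ω).2.2 * (V k ω).1 i *
        Real.sin ((V k ω).2.1 + ⟪(V k ω).1, y⟫))) ^ 2 ∂μ)
      ≤ ENNReal.ofReal (ci i / n) := fun i =>
    lintegral_term_bound _ (hqimeas i) (fun ω y => sq_nonneg _) _ (hbqi i)
  have key : ∫⁻ ω, ENNReal.ofReal ((∫ y, (f y - Φ ω y) ^ 2 ∂μ) +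
      ∑ i : Fin D, ∫ y, (pder i f y - (1 / n : ℝ) * ∑ k, -((V k ω).2.2 * (V k ω).1 i *
        Real.sin ((V k ω).2.1 + ⟪(V k ω).1, y⟫))) ^ 2 ∂μ)
      ≤ ENNReal.ofReal ((c0 + ∑ i : Fin D, ci i) / n) := by
    have hsplit : ∀ ω, ENNReal.ofReal ((∫ y, (f y - Φ ω y) ^ 2 ∂μ) +
        ∑ i : Fin D, ∫ y, (pder i f y - (1 / n : ℝ) * ∑ k, -((V k ω).2.2 * (V k ω).1 i *
          Real.sin ((V k ω).2.1 + ⟪(V k ω).1, y⟫))) ^ 2 ∂μ)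
        = ENNReal.ofReal (∫ y, (f y - Φ ω y) ^ 2 ∂μ) +
          ∑ i : Fin D, ENNReal.ofReal (∫ y, (pder i f y - (1 / n : ℝ) *
            ∑ k, -((V k ω).2.2 * (V k ω).1 i *
              Real.sin ((V k ω).2.1 + ⟪(V k ω).1, y⟫))) ^ 2 ∂μ) := by
      intro ω
      rw [ENNReal.ofReal_add (integral_nonneg (fun y => sq_nonneg _))
        (Finset.sum_nonneg (fun i _ => integral_nonneg (fun y => sq_nonneg _))),
        ENNReal.ofReal_sum_of_nonneg (fun i _ => integral_nonneg (fun y => sq_nonneg _))]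
    calc ∫⁻ ω, ENNReal.ofReal ((∫ y, (f y - Φ ω y) ^ 2 ∂μ) +
        ∑ i : Fin D, ∫ y, (pder i f y - (1 / n : ℝ) * ∑ k, -((V k ω).2.2 * (V k ω).1 i *
          Real.sin ((V k ω).2.1 + ⟪(V k ω).1, y⟫))) ^ 2 ∂μ)
        = ∫⁻ ω, (ENNReal.ofReal (∫ y, (f y - Φ ω y) ^ 2 ∂μ) +
          ∑ i : Fin D, ENNReal.ofReal (∫ y, (pder i f y - (1 / n : ℝ) *
            ∑ k, -((V k ω).2.2 * (V k ω).1 i *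
              Real.sin ((V k ω).2.1 + ⟪(V k ω).1, y⟫))) ^ 2 ∂μ)) := by
          exact lintegral_congr hsplit
      _ = (∫⁻ ω, ENNReal.ofReal (∫ y, (f y - Φ ω y) ^ 2 ∂μ)) +
          ∑ i : Fin D, ∫⁻ ω, ENNReal.ofReal (∫ y, (pder i f y - (1 / n : ℝ) *
            ∑ k, -((V k ω).2.2 * (V k ω).1 i *
              Real.sin ((V k ω).2.1 + ⟪(V k ω).1, y⟫))) ^ 2 ∂μ) := by
          rw [lintegral_add_left hT0sm.measurable.ennreal_ofReal,
            lintegral_finset_sum]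
          intro i _
          exact (hTism i).measurable.ennreal_ofReal
      _ ≤ ENNReal.ofReal (c0 / n) + ∑ i : Fin D, ENNReal.ofReal (ci i / n) := by
          exact add_le_add hb0 (Finset.sum_le_sum (fun i _ => hbi i))
      _ = ENNReal.ofReal ((c0 + ∑ i : Fin D, ci i) / n) := by
          rw [add_div, Finset.sum_div,
            ← ENNReal.ofReal_sum_of_nonneg (fun i _ => div_nonneg (hcinn i)
              (by positivity)),
            ← ENNReal.ofReal_add (div_nonneg hc0nn (by positivity))
              (Finset.sum_nonneg (fun i _ => div_nonneg (hcinn i) (by positivity)))]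
  refine ENNReal.toReal_le_of_le_ofReal ?_ key
  positivity
end

section
/- Let d ≥ 1, K ≥ 2, L ≥ 1, ε₀ ≥ 0, and let D ⊆ ℝ^d. For k = 2,…,K−1 let f_k : (ℝ^d)^{K−k} × ℝ^d → ℝ^d be L-Lipschitz in its first argument (with respect to Euclidean norms) and satisfy ‖f_k(u, z) − u₁‖ ≤ ε₀ for all u = (u₁,…,u_{K−k}) ∈ (ℝ^d)^{K−k} and z ∈ D, where u₁ denotes the first ℝ^d-block of u; and let f_K : ℝ^d → ℝ^d satisfy ‖f_K(z) − z‖ ≤ ε₀ for all z ∈ D. Let z : ℤ → D be an input sequence and let x̂^{(2)},…,x̂^{(K)} : ℤ → ℝ^d be sequences satisfying, for all t ∈ ℤ, x̂_t^{(K)} = f_K(z_t) and x̂_t^{(k)} = f_k((x̂_{t−1}^{(k+1)},…,x̂_{t−1}^{(K)}), z_t) for k = 2,…,K−1. Then for all t ∈ ℤ and all k = 2,…,K: ‖z_{t−K+k} − x̂_t^{(k)}‖² ≤ ( Σ_{j=1}^{K−k+1} (2L)^j ) ε₀². -/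
open scoped BigOperators

/-- delay-line error-propagation estimate. A cascade of maps
`f_k : (ℝ^d)^{K−k} × ℝ^d → ℝ^d` (`k = 2,…,K−1`), each `L`-Lipschitz in its first argument
and copying its first `ℝ^d`-block up to uniform error `ε₀`, together with `f_K : ℝ^d → ℝ^d`
copying the current input up to error `ε₀`, reproduces the last `K−1` inputs with
geometrically weighted error. The first argument of `f_k` carries the Euclidean (ℓ²) norm
of `(ℝ^d)^{K−k}`, realized as `PiLp 2`. -/
theorem delay_line_error_propagation
    (d K : ℕ) (hd : 1 ≤ d) (hK : 2 ≤ K) (L ε₀ : ℝ) (hL : 1 ≤ L) (hε₀ : 0 ≤ ε₀)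
    (D : Set (EuclideanSpace ℝ (Fin d)))
    (f : (k : ℕ) → (PiLp 2 fun _ : Fin (K - k) => EuclideanSpace ℝ (Fin d)) →
      EuclideanSpace ℝ (Fin d) → EuclideanSpace ℝ (Fin d))
    (fK : EuclideanSpace ℝ (Fin d) → EuclideanSpace ℝ (Fin d))
    (hLip : ∀ k, 2 ≤ k → k ≤ K - 1 →
      ∀ (u u' : PiLp 2 fun _ : Fin (K - k) => EuclideanSpace ℝ (Fin d)),
      ∀ z : EuclideanSpace ℝ (Fin d), ‖f k u z - f k u' z‖ ≤ L * ‖u - u'‖)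
    (hShift : ∀ k (hk2 : 2 ≤ k) (hk1 : k ≤ K - 1),
      ∀ (u : PiLp 2 fun _ : Fin (K - k) => EuclideanSpace ℝ (Fin d)),
      ∀ z ∈ D, ‖f k u z - u ⟨0, by omega⟩‖ ≤ ε₀)
    (hfK : ∀ z ∈ D, ‖fK z - z‖ ≤ ε₀)
    (z : ℤ → EuclideanSpace ℝ (Fin d)) (hz : ∀ t, z t ∈ D)
    (xhat : ℕ → ℤ → EuclideanSpace ℝ (Fin d))
    (hrecK : ∀ t : ℤ, xhat K t = fK (z t))
    (hrec : ∀ k (hk2 : 2 ≤ k) (hk1 : k ≤ K - 1), ∀ t : ℤ,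
      xhat k t = f k ((WithLp.equiv 2 _).symm
        (fun j : Fin (K - k) => xhat (k + 1 + j.val) (t - 1))) (z t)) :
    ∀ t : ℤ, ∀ k, 2 ≤ k → k ≤ K →
      ‖z (t - K + k) - xhat k t‖ ^ 2 ≤
        (∑ j ∈ Finset.Icc 1 (K - k + 1), (2 * L) ^ j) * ε₀ ^ 2 := by
  set x : ℝ := 2 * L with hx
  have hx2 : (2:ℝ) ≤ x := by nlinarith
  have hx0 : (0:ℝ) ≤ x := by linarith
  -- S n := ∑ j in Icc 1 n, x^j
  have hSnn : ∀ n : ℕ, 0 ≤ ∑ j ∈ Finset.Icc 1 n, x ^ j := by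
    intro n
    exact Finset.sum_nonneg fun j _ => pow_nonneg hx0 j
  have hSrec : ∀ n : ℕ, x * (1 + ∑ j ∈ Finset.Icc 1 n, x ^ j)
      = ∑ j ∈ Finset.Icc 1 (n + 1), x ^ j := by
    intro n
    induction n with
    | zero => simp
    | succ n ih =>
      rw [Finset.sum_Icc_succ_top (by omega : 1 ≤ n + 1),
        Finset.sum_Icc_succ_top (by omega : 1 ≤ n + 2)]
      linear_combination ih
  have key : ∀ m : ℕ, ∀ t : ℤ, ∀ k : ℕ, 2 ≤ k → k ≤ K → K - k = m →
      ‖z (t - K + k) - xhat k t‖ ^ 2 ≤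
        (∑ j ∈ Finset.Icc 1 (K - k + 1), x ^ j) * ε₀ ^ 2 := by
    intro m
    induction m with
    | zero =>
      intro t k hk2 hkK hm
      have hkeq : k = K := by omega
      subst hkeq
      have ht : t - (k:ℤ) + k = t := by ring
      rw [ht, hrecK, Nat.sub_self]
      have h1 : ‖z t - fK (z t)‖ ≤ ε₀ := by
        have := hfK (z t) (hz t)
        calc ‖z t - fK (z t)‖ = ‖fK (z t) - z t‖ := by rw [norm_sub_rev]
          _ ≤ ε₀ := this
      have hn : (0:ℝ) ≤ ‖z t - fK (z t)‖ := norm_nonneg _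
      simp only [zero_add, Finset.Icc_self, Finset.sum_singleton, pow_one]
      nlinarith
    | succ m ih =>
      intro t k hk2 hkK hm
      have hk1 : k ≤ K - 1 := by omega
      have hrk := hrec k hk2 hk1 t
      set u : PiLp 2 fun _ : Fin (K - k) => EuclideanSpace ℝ (Fin d) :=
        (WithLp.equiv 2 _).symm (fun j : Fin (K - k) => xhat (k + 1 + j.val) (t - 1)) with hu
      have hpos : 0 < K - k := by omega
      have hu0 : u ⟨0, hpos⟩ = xhat (k + 1) (t - 1) := by
        simp [hu]
      have hb : ‖xhat k t - xhat (k + 1) (t - 1)‖ ≤ ε₀ := by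
        rw [hrk, ← hu0]
        exact hShift k hk2 hk1 u (z t) (hz t)
      have hih := ih (t - 1) (k + 1) (by omega) (by omega) (by omega)
      have hzeq : (t - 1) - (K:ℤ) + ((k:ℕ) + 1 : ℕ) = t - K + k := by
        push_cast; ring
      rw [hzeq] at hih
      have hidx : K - (k + 1) + 1 = m + 1 := by omega
      rw [hidx] at hih
      have hidx2 : K - k + 1 = m + 2 := by omega
      rw [hidx2]
      set a := z (t - K + k) - xhat (k + 1) (t - 1) with ha
      set b := xhat (k + 1) (t - 1) - xhat k t with hbdef
      have habe : z (t - K + k) - xhat k t = a + b :=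
        (sub_add_sub_cancel _ _ _).symm
      rw [habe]
      have htri : ‖a + b‖ ≤ ‖a‖ + ‖b‖ := norm_add_le a b
      have hbnorm : ‖b‖ ≤ ε₀ := by
        rw [hbdef, norm_sub_rev]; exact hb
      have hgeom : x * (1 + ∑ j ∈ Finset.Icc 1 (m + 1), x ^ j)
          = ∑ j ∈ Finset.Icc 1 (m + 2), x ^ j := hSrec (m + 1)
      have hS1 := hSnn (m + 1)
      nlinarith [norm_nonneg a, norm_nonneg b, norm_nonneg (a + b), sq_nonneg (‖a‖ - ‖b‖),
        sq_nonneg ε₀, hih, hbnorm, htri]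
  intro t k hk2 hkK
  exact key (K - k) t k hk2 hkK rfl
end
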